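/- Let v be a Sturmian sequence over a two-letter alphabet {a, b}, let c be a letter distinct from a and b, and let u = π(v), i.e., u(2i) = v(i) and u(2i+1) = c for all i ∈ ℕ. Then r_u(n+2) = r_u(n) + 1 for every n ∈ ℕ. -/

import Mathlib

/-!
For a binary Sturmian sequence `v`, the language is closed under reversal and contains one
palindrome of each even length and two of each odd length; both facts are proved together by
induction on the length. The only delicate factors are the `α z β` around the bispecial factor
`z`, which turns out to be a palindrome. The returns of `v` to `z` follow two loops, one leaving
`z` by each letter; read backwards a loop is again a loop, and a palindrome of length `|z| + 1`
forces every loop to come back through the letter by which it left. If `β z α` were missing for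
some `α ≠ β`, the `β`-loop would repeat forever, contradicting aperiodicity.

A reflection class is `{w, w.reverse}`, so `2 r_v(n) = C_v(n) + P_v(n)` and hence
`r_v(n + 2) = r_v(n) + 1`. For `u = π(v)`, a factor of even length `2m` is, up to reversal,
`π(x)` for a unique `x ∈ L_m(v)`, so `r_u(2m) = m + 1`. A factor of odd length `2m + 1` is
either `π(x)` without its last letter, `x ∈ L_{m+1}(v)`, or `c π(y)`, `y ∈ L_m(v)`; reversal
preserves both shapes, so `r_u(2m + 1) = r_v(m + 1) + r_v(m)`.
-/

namespace ReflPaper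

variable {A : Type*}

/-- The factor of `u` of length `n` at position `i`: `u(i) u(i+1) ⋯ u(i+n-1)`. -/
def factorAt (u : ℕ → A) (n i : ℕ) : List A :=
  (List.range n).map (fun k => u (i + k))

/-- The word `w` occurs in the sequence `u` at position `i`. -/
def OccursAt (u : ℕ → A) (w : List A) (i : ℕ) : Prop :=
  w = factorAt u w.length i

/-- The language of `u`: the set of all factors of `u`. -/
def Lang (u : ℕ → A) : Set (List A) := {w | ∃ i, OccursAt u w i}

/-- The set of factors of `u` of length `n`. -/
def LangN (u : ℕ → A) (n : ℕ) : Set (List A) := {w | w.length = n ∧ w ∈ Lang u}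

/-- The word `w` occurs infinitely many times in `u`. -/
def OccursInf (u : ℕ → A) (w : List A) : Prop := {i | OccursAt u w i}.Infinite

/-- `u` is eventually periodic. -/
def EventuallyPeriodic (u : ℕ → A) : Prop :=
  ∃ N p : ℕ, 1 ≤ p ∧ ∀ i, N ≤ i → u (i + p) = u i

/-- Two words are reflectively equivalent if one equals the other or its reversal. -/
def ReflEquiv (w v : List A) : Prop := w = v ∨ w = v.reverse

/-- Reflective equivalence as a setoid on words. -/
def reflSetoid (A : Type*) : Setoid (List A) where
  r := ReflEquiv
  iseqv := by
    constructor
    · intro w; exact Or.inl rfl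
    · intro w v h
      rcases h with h | h
      · exact Or.inl h.symm
      · subst h; simp [ReflEquiv]
    · intro w v x h1 h2
      rcases h1 with h1 | h1 <;> rcases h2 with h2 | h2 <;> subst h1 <;>
        simp [ReflEquiv, h2]

/-- The number of reflective-equivalence classes of words in a set `S`. -/
noncomputable def nClasses (S : Set (List A)) : ℕ :=
  Set.ncard (Quotient.mk (reflSetoid A) '' S)

/-- The reflection complexity `r_u(n)`. -/
noncomputable def reflComplexity (u : ℕ → A) (n : ℕ) : ℕ := nClasses (LangN u n)

/-- The factor complexity `C_u(n) = #L_n(u)`. -/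
noncomputable def factorComplexity (u : ℕ → A) (n : ℕ) : ℕ := (LangN u n).ncard

/-- The palindromic complexity `P_u(n)`. -/
noncomputable def palComplexity (u : ℕ → A) (n : ℕ) : ℕ :=
  Set.ncard {w ∈ LangN u n | w.reverse = w}

/-- Both-sided extensions of `w` in the language of `u`. -/
def Bext (u : ℕ → A) (w : List A) : Set (List A) :=
  {x ∈ Lang u | ∃ a b : A, x = a :: (w ++ [b])}

/-- Right extensions of `w` in the language of `u`. -/
def Rext (u : ℕ → A) (w : List A) : Set (List A) :=
  {x ∈ Lang u | ∃ a : A, x = w ++ [a]}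

/-- `T(w)`: the number of reflective-equivalence classes of `Bext(w) ∪ Bext(w̄)`. -/
noncomputable def TT (u : ℕ → A) (w : List A) : ℕ :=
  nClasses (Bext u w ∪ Bext u w.reverse)

/-- `w` is a right special factor of `u`. -/
def RightSpecial (u : ℕ → A) (w : List A) : Prop :=
  ∃ a b : A, a ≠ b ∧ w ++ [a] ∈ Lang u ∧ w ++ [b] ∈ Lang u

/-- `w` is a left special factor of `u`. -/
def LeftSpecial (u : ℕ → A) (w : List A) : Prop :=
  ∃ a b : A, a ≠ b ∧ a :: w ∈ Lang u ∧ b :: w ∈ Lang u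

/-- `u` is Sturmian: `C_u(n) = n + 1` for all `n`. -/
def Sturmian (u : ℕ → A) : Prop := ∀ n, factorComplexity u n = n + 1

/-- `u` is quasi-Sturmian: `C_u(n) = n + c` eventually. -/
def QuasiSturmian (u : ℕ → A) : Prop :=
  ∃ n₀ c : ℕ, ∀ n, n₀ ≤ n → factorComplexity u n = n + c

open scoped Classical

section Factors

lemma length_factorAt (u : ℕ → A) (n i : ℕ) : (factorAt u n i).length = n := by
  simp [factorAt]

lemma factorAt_eq_factorAt_iff {u : ℕ → A} {n i j : ℕ} :
    factorAt u n i = factorAt u n j ↔ ∀ k < n, u (i + k) = u (j + k) := by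
  simp [factorAt]

lemma factorAt_add (u : ℕ → A) (m k i : ℕ) :
    factorAt u (m + k) i = factorAt u m i ++ factorAt u k (i + m) := by
  simp [factorAt, List.range_add, Nat.add_assoc]

lemma factorAt_succ (u : ℕ → A) (n i : ℕ) :
    factorAt u (n + 1) i = factorAt u n i ++ [u (i + n)] := by
  rw [factorAt_add]
  rfl

lemma factorAt_succ' (u : ℕ → A) (n i : ℕ) :
    factorAt u (n + 1) i = u i :: factorAt u n (i + 1) := by
  rw [Nat.add_comm, factorAt_add]
  simp [factorAt]

lemma factorAt_eq_of_le {u : ℕ → A} {M i j : ℕ} (h : factorAt u M i = factorAt u M j)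
    {s k : ℕ} (hsk : s + k ≤ M) : factorAt u k (i + s) = factorAt u k (j + s) := by
  rw [factorAt_eq_factorAt_iff] at h ⊢
  intro t ht
  simpa [Nat.add_assoc] using h (s + t) (by omega)

lemma factorAt_mem_Lang (u : ℕ → A) (n i : ℕ) : factorAt u n i ∈ Lang u :=
  ⟨i, by simp [OccursAt, length_factorAt]⟩

lemma factorAt_mem_LangN (u : ℕ → A) (n i : ℕ) : factorAt u n i ∈ LangN u n :=
  ⟨length_factorAt u n i, factorAt_mem_Lang u n i⟩

lemma mem_LangN_iff {u : ℕ → A} {n : ℕ} {w : List A} :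
    w ∈ LangN u n ↔ ∃ i, w = factorAt u n i := by
  constructor
  · rintro ⟨rfl, i, hw⟩
    exact ⟨i, hw⟩
  · rintro ⟨i, rfl⟩
    exact factorAt_mem_LangN u n i

lemma exists_factorAt_eq_of_mem_Lang {u : ℕ → A} {w : List A} (h : w ∈ Lang u) {n : ℕ}
    (hn : w.length = n) : ∃ i, factorAt u n i = w :=
  let ⟨i, hi⟩ := h
  ⟨i, by rw [← hn, ← hi]⟩

lemma nil_mem_Lang (u : ℕ → A) : [] ∈ Lang u :=
  factorAt_mem_Lang u 0 0

lemma mem_Lang_of_append_mem {u : ℕ → A} {w w' : List A} (h : w ++ w' ∈ Lang u) :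
    w ∈ Lang u ∧ w' ∈ Lang u := by
  obtain ⟨i, hi⟩ := h
  rw [OccursAt, List.length_append, factorAt_add] at hi
  obtain ⟨h₁, h₂⟩ := List.append_inj hi (length_factorAt u _ i).symm
  exact ⟨⟨i, h₁⟩, ⟨i + w.length, h₂⟩⟩

lemma mem_Lang_of_cons_mem {u : ℕ → A} {x : A} {w : List A} (h : x :: w ∈ Lang u) :
    w ∈ Lang u :=
  (mem_Lang_of_append_mem (w := [x]) h).2

lemma exists_append_singleton_mem {u : ℕ → A} {w : List A} (h : w ∈ Lang u) :
    ∃ x, w ++ [x] ∈ Lang u := by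
  obtain ⟨i, hi⟩ := h
  exact ⟨u (i + w.length), by rw [hi, length_factorAt, ← factorAt_succ]; exact factorAt_mem_Lang ..⟩

lemma exists_eq_of_mem_Lang {u : ℕ → A} {w : List A} (h : w ∈ Lang u) {x : A} (hx : x ∈ w) :
    ∃ i, x = u i := by
  obtain ⟨i, hi⟩ := h
  rw [OccursAt, factorAt] at hi
  rw [hi] at hx
  obtain ⟨k, -, rfl⟩ := List.mem_map.1 hx
  exact ⟨i + k, rfl⟩

lemma finite_LangN [Finite A] (u : ℕ → A) (n : ℕ) : (LangN u n).Finite :=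
  (List.finite_length_eq A n).subset fun _ hw => hw.1

lemma ncard_LangN_zero (u : ℕ → A) : (LangN u 0).ncard = 1 := by
  have : LangN u 0 = {[]} := by
    ext w
    simp only [LangN, List.length_eq_zero_iff, Set.mem_ofPred_eq, Set.mem_singleton_iff,
      and_iff_left_iff_imp]
    rintro rfl
    exact nil_mem_Lang u
  simp [this]

lemma factorAt_succ_eq_of_not_rightSpecial {u : ℕ → A} {k i j : ℕ}
    (h : factorAt u k i = factorAt u k j) (hs : ¬RightSpecial u (factorAt u k i)) :
    factorAt u (k + 1) i = factorAt u (k + 1) j := by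
  rw [factorAt_succ, factorAt_succ, ← h]
  by_contra hne
  refine hs ⟨u (i + k), u (j + k), fun he => hne (by rw [he]), ?_, ?_⟩
  · rw [← factorAt_succ]; exact factorAt_mem_Lang ..
  · rw [h, ← factorAt_succ]; exact factorAt_mem_Lang ..

lemma factorAt_succ_eq_of_not_leftSpecial {u : ℕ → A} {k i j : ℕ}
    (h : factorAt u k (i + 1) = factorAt u k (j + 1))
    (hs : ¬LeftSpecial u (factorAt u k (i + 1))) :
    factorAt u (k + 1) i = factorAt u (k + 1) j := by
  rw [factorAt_succ', factorAt_succ', ← h]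
  by_contra hne
  refine hs ⟨u i, u j, fun he => hne (by rw [he]), ?_, ?_⟩
  · rw [← factorAt_succ']; exact factorAt_mem_Lang ..
  · rw [h, ← factorAt_succ']; exact factorAt_mem_Lang ..

lemma eq_of_not_rightSpecial {u : ℕ → A} {w : List A} (hw : ¬RightSpecial u w) {x y : A}
    (hx : w ++ [x] ∈ Lang u) (hy : w ++ [y] ∈ Lang u) : x = y := by
  by_contra hxy
  exact hw ⟨x, y, hxy, hx, hy⟩

lemma eq_of_not_leftSpecial {u : ℕ → A} {w : List A} (hw : ¬LeftSpecial u w) {x y : A}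
    (hx : x :: w ∈ Lang u) (hy : y :: w ∈ Lang u) : x = y := by
  by_contra hxy
  exact hw ⟨x, y, hxy, hx, hy⟩

lemma exists_eq_cons_append_of_mem_LangN {u : ℕ → A} {n : ℕ} {W : List A}
    (h : W ∈ LangN u (n + 2)) : ∃ α m β, W = α :: m ++ [β] ∧ m ∈ LangN u n := by
  obtain ⟨i, rfl⟩ := mem_LangN_iff.1 h
  exact ⟨u i, factorAt u n (i + 1), u (i + 1 + n), by rw [factorAt_succ', factorAt_succ]; rfl,
    factorAt_mem_LangN ..⟩

lemma reverse_cons_append (α β : A) (m : List A) :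
    (α :: m ++ [β]).reverse = β :: m.reverse ++ [α] := by
  simp

lemma eq_and_reverse_eq_of_reverse_eq {α β : A} {m : List A}
    (h : (α :: m ++ [β]).reverse = α :: m ++ [β]) : β = α ∧ m.reverse = m := by
  rw [reverse_cons_append, List.cons_append, List.cons_append, List.cons_eq_cons] at h
  exact ⟨h.1, (List.append_inj h.2 (by simp)).1⟩

end Factors

lemma sum_eq_card_add_card_filter_one_lt {ι : Type*} {s : Finset ι} {f : ι → ℕ}
    (h : ∀ x ∈ s, 1 ≤ f x ∧ f x ≤ 2) :
    ∑ x ∈ s, f x = s.card + (s.filter fun x => 1 < f x).card := by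
  rw [Finset.card_filter, Finset.card_eq_sum_ones, ← Finset.sum_add_distrib]
  refine Finset.sum_congr rfl fun x hx => ?_
  have := h x hx
  split_ifs <;> omega

section Extensions

variable [Fintype A]

noncomputable def rightExt (u : ℕ → A) (w : List A) : Finset A := {x | w ++ [x] ∈ Lang u}

noncomputable def leftExt (u : ℕ → A) (w : List A) : Finset A := {x | x :: w ∈ Lang u}

@[simp]
lemma mem_rightExt {u : ℕ → A} {w : List A} {x : A} : x ∈ rightExt u w ↔ w ++ [x] ∈ Lang u := by
  simp [rightExt]

@[simp]
lemma mem_leftExt {u : ℕ → A} {w : List A} {x : A} : x ∈ leftExt u w ↔ x :: w ∈ Lang u := by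
  simp [leftExt]

lemma rightSpecial_iff_one_lt_card {u : ℕ → A} {w : List A} :
    RightSpecial u w ↔ 1 < (rightExt u w).card := by
  simp only [Finset.one_lt_card, mem_rightExt, RightSpecial]
  exact ⟨fun ⟨x, y, hxy, hx, hy⟩ => ⟨x, hx, y, hy, hxy⟩,
    fun ⟨x, hx, y, hy, hxy⟩ => ⟨x, y, hxy, hx, hy⟩⟩

lemma leftSpecial_iff_one_lt_card {u : ℕ → A} {w : List A} :
    LeftSpecial u w ↔ 1 < (leftExt u w).card := by
  simp only [Finset.one_lt_card, mem_leftExt, LeftSpecial]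
  exact ⟨fun ⟨x, y, hxy, hx, hy⟩ => ⟨x, hx, y, hy, hxy⟩,
    fun ⟨x, hx, y, hy, hxy⟩ => ⟨x, y, hxy, hx, hy⟩⟩

lemma one_le_card_rightExt {u : ℕ → A} {w : List A} (h : w ∈ Lang u) :
    1 ≤ (rightExt u w).card := by
  obtain ⟨x, hx⟩ := exists_append_singleton_mem h
  exact Finset.card_pos.2 ⟨x, mem_rightExt.2 hx⟩

lemma ncard_LangN_succ_eq_sum_rightExt (u : ℕ → A) (n : ℕ) :
    (LangN u (n + 1)).ncard = ∑ w ∈ (finite_LangN u n).toFinset, (rightExt u w).card := by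
  rw [Set.ncard_eq_toFinset_card _ (finite_LangN u (n + 1)),
    Finset.card_eq_sum_card_fiberwise (f := List.dropLast)]
  · refine Finset.sum_congr rfl fun w hw => ?_
    rw [Set.Finite.mem_toFinset] at hw
    rw [← Finset.card_image_of_injective (rightExt u w) (f := fun x => w ++ [x])
      fun x y h => by simpa using h]
    congr 1
    ext W
    simp only [Finset.mem_filter, Set.Finite.mem_toFinset, Finset.mem_image, mem_rightExt]
    constructor
    · rintro ⟨hW, rfl⟩
      obtain ⟨i, rfl⟩ := mem_LangN_iff.1 hW
      rw [factorAt_succ] at hW ⊢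
      exact ⟨_, by simpa using hW.2, by simp⟩
    · rintro ⟨x, hx, rfl⟩
      exact ⟨⟨by simp [hw.1], hx⟩, by simp⟩
  · intro W hW
    rw [Finset.mem_coe, Set.Finite.mem_toFinset] at hW ⊢
    obtain ⟨i, rfl⟩ := mem_LangN_iff.1 hW
    rw [factorAt_succ, List.dropLast_concat]
    exact factorAt_mem_LangN ..

lemma ncard_LangN_succ_eq_sum_leftExt (u : ℕ → A) (n : ℕ) :
    (LangN u (n + 1)).ncard = ∑ w ∈ (finite_LangN u n).toFinset, (leftExt u w).card := by
  rw [Set.ncard_eq_toFinset_card _ (finite_LangN u (n + 1)),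
    Finset.card_eq_sum_card_fiberwise (f := List.tail)]
  · refine Finset.sum_congr rfl fun w hw => ?_
    rw [Set.Finite.mem_toFinset] at hw
    rw [← Finset.card_image_of_injective (leftExt u w) (f := fun x => x :: w)
      fun x y h => by simpa using h]
    congr 1
    ext W
    simp only [Finset.mem_filter, Set.Finite.mem_toFinset, Finset.mem_image, mem_leftExt]
    constructor
    · rintro ⟨hW, rfl⟩
      obtain ⟨i, rfl⟩ := mem_LangN_iff.1 hW
      rw [factorAt_succ'] at hW ⊢
      exact ⟨_, hW.2, rfl⟩
    · rintro ⟨x, hx, rfl⟩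
      exact ⟨⟨by simp [hw.1], hx⟩, rfl⟩
  · intro W hW
    rw [Finset.mem_coe, Set.Finite.mem_toFinset] at hW ⊢
    obtain ⟨i, rfl⟩ := mem_LangN_iff.1 hW
    rw [factorAt_succ', List.tail_cons]
    exact factorAt_mem_LangN ..

end Extensions

section MorseHedlund

lemma eventuallyPeriodic_of_forall_not_rightSpecial [Finite A] {u : ℕ → A} {k : ℕ}
    (h : ∀ w ∈ LangN u k, ¬RightSpecial u w) : EventuallyPeriodic u := by
  obtain ⟨i, j, hij, he⟩ : ∃ i j, i < j ∧ factorAt u k i = factorAt u k j := by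
    have : Finite {l : List A // l.length = k} := (List.finite_length_eq A k).to_subtype
    obtain ⟨i, j, hne, hij⟩ := Finite.exists_ne_map_eq_of_infinite
      fun i => (⟨factorAt u k i, length_factorAt u k i⟩ : {l : List A // l.length = k})
    rcases Nat.lt_or_gt_of_ne hne with h | h
    · exact ⟨i, j, h, congrArg Subtype.val hij⟩
    · exact ⟨j, i, h, congrArg Subtype.val hij.symm⟩
  have hshift : ∀ s, factorAt u (k + 1) (i + s) = factorAt u (k + 1) (j + s) := by
    intro s
    induction s with
    | zero => exact factorAt_succ_eq_of_not_rightSpecial he (h _ (factorAt_mem_LangN ..))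
    | succ s ih =>
      have ih' := congrArg List.tail ih
      simp only [factorAt_succ', List.tail_cons] at ih'
      exact factorAt_succ_eq_of_not_rightSpecial ih' (h _ (factorAt_mem_LangN ..))
  refine ⟨i, j - i, by omega, fun m hm => ?_⟩
  have := factorAt_eq_factorAt_iff.1 (hshift (m - i)) 0 (by omega)
  rw [show i + (m - i) + 0 = m by omega, show j + (m - i) + 0 = m + (j - i) by omega] at this
  exact this.symm

lemma exists_ncard_LangN_succ_le {u : ℕ → A} {n₀ : ℕ} (h : (LangN u n₀).ncard ≤ n₀) :
    ∃ k, (LangN u (k + 1)).ncard ≤ (LangN u k).ncard := by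
  by_contra! hc
  have hgrow : ∀ k, k + 1 ≤ (LangN u k).ncard := by
    intro k
    induction k with
    | zero => simp [ncard_LangN_zero]
    | succ k ih => have := hc k; omega
  have := hgrow n₀
  omega

lemma not_rightSpecial_of_ncard_LangN_succ_le [Fintype A] {u : ℕ → A} {k : ℕ}
    (h : (LangN u (k + 1)).ncard ≤ (LangN u k).ncard) : ∀ w ∈ LangN u k, ¬RightSpecial u w := by
  intro w hw hrs
  have hlt : ∑ _w ∈ (finite_LangN u k).toFinset, 1 <
      ∑ w ∈ (finite_LangN u k).toFinset, (rightExt u w).card :=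
    Finset.sum_lt_sum (fun w hw => one_le_card_rightExt ((Set.Finite.mem_toFinset _).1 hw).2)
      ⟨w, (Set.Finite.mem_toFinset _).2 hw, rightSpecial_iff_one_lt_card.1 hrs⟩
  rw [← ncard_LangN_succ_eq_sum_rightExt, Finset.sum_const, smul_eq_mul, mul_one,
    ← Set.ncard_eq_toFinset_card _ (finite_LangN u k)] at hlt
  omega

theorem eventuallyPeriodic_of_ncard_LangN_le [Fintype A] {u : ℕ → A} {n₀ : ℕ}
    (h : (LangN u n₀).ncard ≤ n₀) : EventuallyPeriodic u :=
  let ⟨_, hk⟩ := exists_ncard_LangN_succ_le h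
  eventuallyPeriodic_of_forall_not_rightSpecial (not_rightSpecial_of_ncard_LangN_succ_le hk)

lemma EventuallyPeriodic.exists_ncard_LangN_le {u : ℕ → A} (h : EventuallyPeriodic u) :
    ∃ B, ∀ k, (LangN u k).ncard ≤ B := by
  obtain ⟨N, p, hp, hper⟩ := h
  refine ⟨N + p, fun k => ?_⟩
  have hsmall : ∀ i, ∃ i' < N + p, factorAt u k i' = factorAt u k i := by
    intro i
    induction i using Nat.strong_induction_on with
    | _ i ih =>
      by_cases hi : i < N + p
      · exact ⟨i, hi, rfl⟩
      obtain ⟨i', hi', he⟩ := ih (i - p) (by omega)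
      refine ⟨i', hi', he.trans (factorAt_eq_factorAt_iff.2 fun t _ => ?_)⟩
      rw [← hper (i - p + t) (by omega), show i - p + t + p = i + t by omega]
  calc (LangN u k).ncard ≤ ((Finset.range (N + p)).image (factorAt u k)).card := by
        rw [← Set.ncard_coe_finset]
        refine Set.ncard_le_ncard (fun w hw => ?_) (Finset.finite_toSet _)
        obtain ⟨i, rfl⟩ := mem_LangN_iff.1 hw
        simpa using hsmall i
    _ ≤ N + p := Finset.card_image_le.trans (by simp)

lemma eventuallyPeriodic_of_factorAt_eq {u : ℕ → A} {N T : ℕ} (hT : 1 ≤ T)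
    (h : ∀ k, factorAt u T (N + k * T) = factorAt u T N) : EventuallyPeriodic u := by
  refine ⟨N, T, hT, fun m hm => ?_⟩
  obtain ⟨k, r, hr, rfl⟩ : ∃ k r, r < T ∧ m = N + k * T + r :=
    ⟨(m - N) / T, (m - N) % T, Nat.mod_lt _ hT, by have := Nat.div_add_mod' (m - N) T; omega⟩
  have h₁ := factorAt_eq_factorAt_iff.1 (h (k + 1)) r hr
  have h₂ := factorAt_eq_factorAt_iff.1 (h k) r hr
  rw [show N + k * T + r + T = N + (k + 1) * T + r by ring, h₁, h₂]

lemma Sturmian.ncard_LangN {v : ℕ → A} (hst : Sturmian v) (n : ℕ) :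
    (LangN v n).ncard = n + 1 :=
  hst n

lemma Sturmian.not_eventuallyPeriodic {v : ℕ → A} (hst : Sturmian v) :
    ¬EventuallyPeriodic v := fun h => by
  obtain ⟨B, hB⟩ := h.exists_ncard_LangN_le
  have := hB B
  rw [hst.ncard_LangN] at this
  omega

theorem Sturmian.occursInf [Fintype A] {v : ℕ → A} (hst : Sturmian v) {w : List A}
    (hw : w ∈ Lang v) : OccursInf v w := by
  intro hfin
  obtain ⟨N, hN⟩ := hfin.bddAbove
  set x : ℕ → A := fun i => v (N + 1 + i)
  have hx : ∀ k i, factorAt x k i = factorAt v k (N + 1 + i) := by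
    simp [x, factorAt, Nat.add_assoc]
  have hsub : LangN x w.length ⊆ LangN v w.length \ {w} := by
    intro y hy
    obtain ⟨i, rfl⟩ := mem_LangN_iff.1 hy
    rw [hx]
    refine ⟨factorAt_mem_LangN .., fun hyw => ?_⟩
    have : N + 1 + i ≤ N := hN (show OccursAt v w (N + 1 + i) from hyw.symm)
    omega
  have hle : (LangN x w.length).ncard ≤ w.length := by
    refine (Set.ncard_le_ncard hsub (finite_LangN v _).sdiff).trans ?_
    rw [Set.ncard_sdiff_singleton_of_mem (show w ∈ LangN v w.length from ⟨rfl, hw⟩),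
      hst.ncard_LangN]
    omega
  obtain ⟨M, p, hp, hper⟩ := eventuallyPeriodic_of_ncard_LangN_le hle
  refine hst.not_eventuallyPeriodic ⟨N + 1 + M, p, hp, fun m hm => ?_⟩
  have := hper (m - (N + 1)) (by omega)
  simp only [x] at this
  rwa [show N + 1 + (m - (N + 1) + p) = m + p by omega,
    show N + 1 + (m - (N + 1)) = m by omega] at this

lemma OccursInf.exists_ge {u : ℕ → A} {w : List A} (h : OccursInf u w) (N : ℕ) :
    ∃ i, N ≤ i ∧ w = factorAt u w.length i :=
  let ⟨i, hi, hlt⟩ := h.exists_gt N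
  ⟨i, hlt.le, hi⟩

lemma OccursInf.exists_cons_mem {u : ℕ → A} {w : List A} (h : OccursInf u w) :
    ∃ x, x :: w ∈ Lang u := by
  obtain ⟨i, hi, hw⟩ := h.exists_ge 1
  refine ⟨u (i - 1), ?_⟩
  rw [hw, show i = i - 1 + 1 by omega, Nat.add_sub_cancel, ← factorAt_succ']
  exact factorAt_mem_Lang ..

end MorseHedlund

lemma eq_of_ne_of_ne_of_mem_pair {a b x y w : A} (hx : x = a ∨ x = b) (hy : y = a ∨ y = b)
    (hw : w = a ∨ w = b) (hxw : x ≠ w) (hyw : y ≠ w) : x = y := by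
  rcases hx with rfl | rfl <;> rcases hy with rfl | rfl <;> rcases hw with rfl | rfl <;>
    simp_all

structure BinarySturmian (v : ℕ → A) (a b : A) : Prop where
  ne : a ≠ b
  mem : ∀ i, v i = a ∨ v i = b
  sturmian : Sturmian v

namespace BinarySturmian

variable {v : ℕ → A} {a b : A}

lemma mem_of_mem_Lang (hv : BinarySturmian v a b) {w : List A} (hw : w ∈ Lang v) {x : A}
    (hx : x ∈ w) : x = a ∨ x = b := by
  obtain ⟨i, rfl⟩ := exists_eq_of_mem_Lang hw hx
  exact hv.mem i

lemma cons_mem_of_leftSpecial (hv : BinarySturmian v a b) {z : List A} (hl : LeftSpecial v z)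
    {β : A} (hβ : β = a ∨ β = b) : β :: z ∈ Lang v := by
  obtain ⟨x, y, hxy, hx, hy⟩ := hl
  by_cases hβx : β = x
  · exact hβx ▸ hx
  by_contra hβy
  exact hxy (eq_of_ne_of_ne_of_mem_pair (hv.mem_of_mem_Lang hx (by simp))
    (hv.mem_of_mem_Lang hy (by simp)) hβ (Ne.symm hβx) fun h => hβy (h ▸ hy))

lemma append_mem_of_rightSpecial (hv : BinarySturmian v a b) {z : List A}
    (hr : RightSpecial v z) {β : A} (hβ : β = a ∨ β = b) : z ++ [β] ∈ Lang v := by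
  obtain ⟨x, y, hxy, hx, hy⟩ := hr
  by_cases hβx : β = x
  · exact hβx ▸ hx
  by_contra hβy
  exact hxy (eq_of_ne_of_ne_of_mem_pair (hv.mem_of_mem_Lang hx (by simp))
    (hv.mem_of_mem_Lang hy (by simp)) hβ (Ne.symm hβx) fun h => hβy (h ▸ hy))

variable [Fintype A]

lemma card_rightExt_le_two (hv : BinarySturmian v a b) (w : List A) :
    (rightExt v w).card ≤ 2 := by
  refine (Finset.card_le_card (t := {a, b}) fun x hx => ?_).trans Finset.card_le_two
  simpa using hv.mem_of_mem_Lang (mem_rightExt.1 hx) (by simp)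

lemma card_leftExt_le_two (hv : BinarySturmian v a b) (w : List A) :
    (leftExt v w).card ≤ 2 := by
  refine (Finset.card_le_card (t := {a, b}) fun x hx => ?_).trans Finset.card_le_two
  simpa using hv.mem_of_mem_Lang (mem_leftExt.1 hx) (by simp)

lemma one_le_card_leftExt (hv : BinarySturmian v a b) {w : List A} (hw : w ∈ Lang v) :
    1 ≤ (leftExt v w).card := by
  obtain ⟨x, hx⟩ := (hv.sturmian.occursInf hw).exists_cons_mem
  exact Finset.card_pos.2 ⟨x, mem_leftExt.2 hx⟩

lemma card_filter_rightSpecial (hv : BinarySturmian v a b) (n : ℕ) :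
    ((finite_LangN v n).toFinset.filter (RightSpecial v)).card = 1 := by
  have h := ncard_LangN_succ_eq_sum_rightExt v n
  rw [sum_eq_card_add_card_filter_one_lt fun w hw =>
      ⟨one_le_card_rightExt ((Set.Finite.mem_toFinset _).1 hw).2, hv.card_rightExt_le_two w⟩,
    ← Set.ncard_eq_toFinset_card _ (finite_LangN v n), hv.sturmian.ncard_LangN,
    hv.sturmian.ncard_LangN] at h
  simp_rw [rightSpecial_iff_one_lt_card]
  omega

lemma card_filter_leftSpecial (hv : BinarySturmian v a b) (n : ℕ) :
    ((finite_LangN v n).toFinset.filter (LeftSpecial v)).card = 1 := by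
  have h := ncard_LangN_succ_eq_sum_leftExt v n
  rw [sum_eq_card_add_card_filter_one_lt fun w hw =>
      ⟨hv.one_le_card_leftExt ((Set.Finite.mem_toFinset _).1 hw).2, hv.card_leftExt_le_two w⟩,
    ← Set.ncard_eq_toFinset_card _ (finite_LangN v n), hv.sturmian.ncard_LangN,
    hv.sturmian.ncard_LangN] at h
  simp_rw [leftSpecial_iff_one_lt_card]
  omega

lemma exists_rightSpecial (hv : BinarySturmian v a b) (n : ℕ) :
    ∃ z ∈ LangN v n, RightSpecial v z := by
  obtain ⟨z, hz⟩ := Finset.card_pos.1 (hv.card_filter_rightSpecial n).ge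
  exact ⟨z, by simpa using hz⟩

lemma eq_of_rightSpecial (hv : BinarySturmian v a b) {n : ℕ} {w w' : List A}
    (hw : w ∈ LangN v n) (hw' : w' ∈ LangN v n) (h : RightSpecial v w)
    (h' : RightSpecial v w') : w = w' :=
  Finset.card_le_one.1 (hv.card_filter_rightSpecial n).le _ (by simpa using ⟨hw, h⟩) _
    (by simpa using ⟨hw', h'⟩)

lemma eq_of_leftSpecial (hv : BinarySturmian v a b) {n : ℕ} {w w' : List A}
    (hw : w ∈ LangN v n) (hw' : w' ∈ LangN v n) (h : LeftSpecial v w)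
    (h' : LeftSpecial v w') : w = w' :=
  Finset.card_le_one.1 (hv.card_filter_leftSpecial n).le _ (by simpa using ⟨hw, h⟩) _
    (by simpa using ⟨hw', h'⟩)

end BinarySturmian

section ReturnTime

variable {u : ℕ → A} {z : List A}

lemma OccursInf.exists_return (hz : OccursInf u z) (i : ℕ) :
    ∃ T, 1 ≤ T ∧ factorAt u z.length (i + T) = z := by
  obtain ⟨j, hj, hocc⟩ := hz.exists_ge (i + 1)
  exact ⟨j - i, by omega, by rw [show i + (j - i) = j by omega, ← hocc]⟩

noncomputable def returnTime (hz : OccursInf u z) (i : ℕ) : ℕ :=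
  Nat.find (hz.exists_return i)

variable (hz : OccursInf u z)

lemma one_le_returnTime (i : ℕ) : 1 ≤ returnTime hz i :=
  (Nat.find_spec (hz.exists_return i)).1

lemma factorAt_add_returnTime (i : ℕ) : factorAt u z.length (i + returnTime hz i) = z :=
  (Nat.find_spec (hz.exists_return i)).2

lemma factorAt_ne_of_lt_returnTime {i s : ℕ} (h₁ : 1 ≤ s) (h₂ : s < returnTime hz i) :
    factorAt u z.length (i + s) ≠ z :=
  fun h => Nat.find_min (hz.exists_return i) h₂ ⟨h₁, h⟩

lemma returnTime_le {i s : ℕ} (h₁ : 1 ≤ s) (h₂ : factorAt u z.length (i + s) = z) :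
    returnTime hz i ≤ s :=
  Nat.find_min' _ ⟨h₁, h₂⟩

lemma factorAt_returnTime_sub_one {i : ℕ} :
    factorAt u (z.length + 1) (i + (returnTime hz i - 1)) = u (i + (returnTime hz i - 1)) :: z := by
  rw [factorAt_succ', show i + (returnTime hz i - 1) + 1 = i + returnTime hz i by
    have := one_le_returnTime hz i; omega, factorAt_add_returnTime]

end ReturnTime

section Loops

/- An occurrence of `z` at `p` starts a loop, which leaves `z` by the letter `u (p + z.length)`
and returns to it through `u (p + (returnTime hz p - 1))`, the letter before the next occurrence
of `z`. -/

variable {u : ℕ → A} {z : List A}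

lemma factorAt_add_eq_of_forall_ne
    (hR : ∀ w ∈ LangN u z.length, RightSpecial u w → w = z) {i j : ℕ}
    (h : factorAt u (z.length + 1) i = factorAt u (z.length + 1) j) :
    ∀ t, (∀ s, 1 ≤ s → s ≤ t → factorAt u z.length (i + s) ≠ z) →
      factorAt u (z.length + 1 + t) i = factorAt u (z.length + 1 + t) j := by
  intro t
  induction t with
  | zero => exact fun _ => h
  | succ t ih =>
    intro hne
    have ih := ih fun s h₁ h₂ => hne s h₁ (by omega)
    have hwin : factorAt u z.length (i + (t + 1)) = factorAt u z.length (j + (t + 1)) :=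
      factorAt_eq_of_le ih (by omega)
    have hnext := factorAt_eq_factorAt_iff.1 (factorAt_succ_eq_of_not_rightSpecial hwin
      fun hs => hne (t + 1) (by omega) le_rfl (hR _ (factorAt_mem_LangN ..) hs))
      z.length (by omega)
    rw [← Nat.add_assoc, factorAt_succ, factorAt_succ, ih,
      show i + (z.length + 1 + t) = i + (t + 1) + z.length by omega,
      show j + (z.length + 1 + t) = j + (t + 1) + z.length by omega, hnext]

variable (hz : OccursInf u z)

lemma factorAt_returnTime_eq (hR : ∀ w ∈ LangN u z.length, RightSpecial u w → w = z)
    {i j : ℕ} (h : factorAt u (z.length + 1) i = factorAt u (z.length + 1) j) :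
    returnTime hz j = returnTime hz i ∧
      factorAt u (returnTime hz i + z.length) i = factorAt u (returnTime hz i + z.length) j := by
  have hT := one_le_returnTime hz i
  have hseg := factorAt_add_eq_of_forall_ne hR h (returnTime hz i - 1)
    fun s h₁ h₂ => factorAt_ne_of_lt_returnTime hz h₁ (by omega)
  rw [show z.length + 1 + (returnTime hz i - 1) = returnTime hz i + z.length by omega] at hseg
  have hwin (s) (hs : s ≤ returnTime hz i) :
      factorAt u z.length (i + s) = factorAt u z.length (j + s) :=
    factorAt_eq_of_le hseg (by omega)
  refine ⟨le_antisymm ?_ ?_, hseg⟩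
  · exact returnTime_le hz hT (by rw [← hwin _ le_rfl, factorAt_add_returnTime])
  · by_contra hlt
    exact factorAt_ne_of_lt_returnTime hz (one_le_returnTime hz j) (not_le.1 hlt)
      (by rw [hwin _ (by omega), factorAt_add_returnTime])

lemma exists_loop_of_occursInf {W : List A} (hW : OccursInf u W)
    (hlen : W.length = z.length + 1) :
    ∃ p s, factorAt u z.length p = z ∧ s < returnTime hz p ∧
      W = factorAt u (z.length + 1) (p + s) := by
  obtain ⟨m, -, hm⟩ := hz.exists_ge 0
  obtain ⟨q, hmq, hq⟩ := hW.exists_ge m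
  set p := Nat.findGreatest (fun s => factorAt u z.length s = z) q
  have hp : factorAt u z.length p = z :=
    Nat.findGreatest_spec (P := fun s => factorAt u z.length s = z) hmq hm.symm
  have hpq : p ≤ q := Nat.findGreatest_le q
  refine ⟨p, q - p, hp, ?_, by rw [hq, hlen, show p + (q - p) = q by omega]⟩
  by_contra! hle
  exact Nat.findGreatest_is_greatest (P := fun s => factorAt u z.length s = z) (n := q)
    (by have := one_le_returnTime hz p; omega) (by omega) (factorAt_add_returnTime hz p)

lemma eq_of_factorAt_loop_eq (hL : ∀ w ∈ LangN u z.length, LeftSpecial u w → w = z)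
    {p p' : ℕ} (hp : factorAt u z.length p = z) (hp' : factorAt u z.length p' = z) :
    ∀ s s', s < returnTime hz p → s' < returnTime hz p' →
      factorAt u (z.length + 1) (p + s) = factorAt u (z.length + 1) (p' + s') →
      s = s' ∧ factorAt u (z.length + 1) p = factorAt u (z.length + 1) p' := by
  intro s
  induction s with
  | zero =>
    rintro (_ | s') - hs' h
    · exact ⟨rfl, h⟩
    · have hwin := factorAt_eq_of_le h (s := 0) (k := z.length) (by omega)
      simp only [Nat.add_zero, hp] at hwin
      exact absurd hwin.symm (factorAt_ne_of_lt_returnTime hz (by omega) hs')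
  | succ s ih =>
    rintro (_ | s') hs hs' h
    · have hwin := factorAt_eq_of_le h (s := 0) (k := z.length) (by omega)
      simp only [Nat.add_zero, hp'] at hwin
      exact absurd hwin (factorAt_ne_of_lt_returnTime hz (by omega) hs)
    · have hwin := factorAt_eq_of_le h (s := 0) (k := z.length) (by omega)
      have hne := factorAt_ne_of_lt_returnTime hz (by omega) hs
      rw [← Nat.add_assoc] at hne
      simp only [Nat.add_zero, ← Nat.add_assoc] at hwin
      have hprev := factorAt_succ_eq_of_not_leftSpecial (i := p + s) (j := p' + s')
        hwin fun hs => hne (hL _ (factorAt_mem_LangN ..) hs)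
      obtain ⟨rfl, he⟩ := ih s' (by omega) (by omega) hprev
      exact ⟨rfl, he⟩

lemma factorAt_succ_of_factorAt_eq {p : ℕ} (hp : factorAt u z.length p = z) :
    factorAt u (z.length + 1) p = z ++ [u (p + z.length)] := by
  rw [factorAt_succ, hp]

/-- The loop leaving `z` by the return letter of the loop at `p` is that loop read backwards. -/
lemma factorAt_reverse_loop (hR : ∀ w ∈ LangN u z.length, RightSpecial u w → w = z)
    (hpal : z.reverse = z) (hcl : ∀ w ∈ LangN u (z.length + 1), w.reverse ∈ Lang u)
    {p q : ℕ} (hq : factorAt u (z.length + 1) q = z ++ [u (p + (returnTime hz p - 1))]) :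
    ∀ s < returnTime hz p, s < returnTime hz q ∧ factorAt u (z.length + 1) (q + s) =
      (factorAt u (z.length + 1) (p + (returnTime hz p - 1 - s))).reverse := by
  intro s
  induction s with
  | zero =>
    intro _
    refine ⟨one_le_returnTime hz q, ?_⟩
    simp only [Nat.add_zero, Nat.sub_zero]
    rw [factorAt_returnTime_sub_one, List.reverse_cons, hpal, hq]
  | succ s ih =>
    intro hs
    obtain ⟨hsq, he⟩ := ih (by omega)
    set r := returnTime hz p - 1 - (s + 1)
    rw [show returnTime hz p - 1 - s = r + 1 by omega, factorAt_succ' u z.length (q + s),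
      factorAt_succ u z.length (p + (r + 1)), List.reverse_append, List.reverse_singleton,
      List.singleton_append] at he
    have hwin := (List.cons_eq_cons.1 he).2
    have hne_p := factorAt_ne_of_lt_returnTime hz (i := p) (s := r + 1) (by omega) (by omega)
    have hne_q : factorAt u z.length (q + s + 1) ≠ z := by
      rw [hwin]
      intro h
      exact hne_p (by rw [← List.reverse_reverse (factorAt u _ _), h, hpal])
    have hlt : s + 1 < returnTime hz q := by
      by_contra hle
      exact hne_q (by rw [show q + s + 1 = q + returnTime hz q by omega, factorAt_add_returnTime])
    have hrev : factorAt u z.length (q + s + 1) ++ [u (p + r)] ∈ Lang u := by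
      have := hcl _ (factorAt_mem_LangN u (z.length + 1) (p + r))
      rwa [factorAt_succ', List.reverse_cons, show p + r + 1 = p + (r + 1) by omega,
        ← hwin] at this
    have hnext : factorAt u z.length (q + s + 1) ++ [u (q + s + 1 + z.length)] ∈ Lang u := by
      rw [← factorAt_succ]
      exact factorAt_mem_Lang ..
    have hletter := eq_of_not_rightSpecial
      (fun hs => hne_q (hR _ (factorAt_mem_LangN ..) hs)) hnext hrev
    refine ⟨hlt, ?_⟩
    rw [← Nat.add_assoc, factorAt_succ, hletter, factorAt_succ' u z.length (p + r),
      List.reverse_cons, show p + r + 1 = p + (r + 1) by omega, ← hwin]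

lemma returnLetter_eq_of_factorAt_succ_eq
    (hR : ∀ w ∈ LangN u z.length, RightSpecial u w → w = z) {p p' : ℕ}
    (h : factorAt u (z.length + 1) p = factorAt u (z.length + 1) p') :
    u (p + (returnTime hz p - 1)) = u (p' + (returnTime hz p' - 1)) := by
  obtain ⟨hT, hseg⟩ := factorAt_returnTime_eq hz hR h
  rw [hT]
  exact factorAt_eq_factorAt_iff.1 hseg _ (by have := one_le_returnTime hz p; omega)

lemma factorAt_succ_eq_of_returnLetter_eq
    (hL : ∀ w ∈ LangN u z.length, LeftSpecial u w → w = z) {p p' : ℕ}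
    (hp : factorAt u z.length p = z) (hp' : factorAt u z.length p' = z)
    (h : u (p + (returnTime hz p - 1)) = u (p' + (returnTime hz p' - 1))) :
    factorAt u (z.length + 1) p = factorAt u (z.length + 1) p' :=
  (eq_of_factorAt_loop_eq hz hL hp hp' (returnTime hz p - 1) (returnTime hz p' - 1)
    (by have := one_le_returnTime hz p; omega) (by have := one_le_returnTime hz p'; omega)
    (by rw [factorAt_returnTime_sub_one, factorAt_returnTime_sub_one, h])).2

lemma exists_returnLetter_eq_of_palindrome
    (hR : ∀ w ∈ LangN u z.length, RightSpecial u w → w = z)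
    (hL : ∀ w ∈ LangN u z.length, LeftSpecial u w → w = z)
    (hpal : z.reverse = z) (hcl : ∀ w ∈ LangN u (z.length + 1), w.reverse ∈ Lang u)
    {W : List A} (hW : W ∈ LangN u (z.length + 1)) (hWpal : W.reverse = W)
    (hWinf : OccursInf u W) :
    ∃ p, factorAt u z.length p = z ∧ u (p + (returnTime hz p - 1)) = u (p + z.length) := by
  obtain ⟨p, s, hp, hs, rfl⟩ := exists_loop_of_occursInf hz hWinf hW.1
  -- the reversed loop passes through `W.reverse = W` at the same index, so it is the same loop
  have hlast : z ++ [u (p + (returnTime hz p - 1))] ∈ Lang u := by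
    have := hcl _ (factorAt_mem_LangN u _ (p + (returnTime hz p - 1)))
    rwa [factorAt_returnTime_sub_one, List.reverse_cons, hpal] at this
  obtain ⟨q, hq⟩ := exists_factorAt_eq_of_mem_Lang hlast (n := z.length + 1) (by simp)
  have hq' : factorAt u z.length q = z := by
    rw [factorAt_succ] at hq
    exact (List.append_inj hq (by simp [length_factorAt])).1
  obtain ⟨hsq, he⟩ := factorAt_reverse_loop hz hR hpal hcl hq
    (returnTime hz p - 1 - s) (by omega)
  rw [show returnTime hz p - 1 - (returnTime hz p - 1 - s) = s by omega, hWpal] at he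
  obtain ⟨-, hedge⟩ := eq_of_factorAt_loop_eq hz hL hq' hp _ _ hsq hs he
  rw [hq, factorAt_succ_of_factorAt_eq hp] at hedge
  exact ⟨p, hp, by simpa using hedge⟩

lemma returnLetter_eq_of_binary {a b : A} (hab : ∀ i, u i = a ∨ u i = b)
    (hR : ∀ w ∈ LangN u z.length, RightSpecial u w → w = z)
    (hL : ∀ w ∈ LangN u z.length, LeftSpecial u w → w = z) {p₀ : ℕ}
    (hp₀ : factorAt u z.length p₀ = z)
    (h₀ : u (p₀ + (returnTime hz p₀ - 1)) = u (p₀ + z.length))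
    {p : ℕ} (hp : factorAt u z.length p = z) :
    u (p + (returnTime hz p - 1)) = u (p + z.length) := by
  -- the return letter determines the departure letter, and there are only two letters
  by_cases hfirst : u (p + z.length) = u (p₀ + z.length)
  · rw [returnLetter_eq_of_factorAt_succ_eq hz hR (p' := p₀) (by
      rw [factorAt_succ_of_factorAt_eq hp, factorAt_succ_of_factorAt_eq hp₀, hfirst]), h₀, hfirst]
  · have hlast : u (p + (returnTime hz p - 1)) ≠ u (p₀ + z.length) := by
      rw [← h₀]
      intro h
      have := factorAt_succ_eq_of_returnLetter_eq hz hL hp hp₀ h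
      rw [factorAt_succ_of_factorAt_eq hp, factorAt_succ_of_factorAt_eq hp₀] at this
      exact hfirst (by simpa using this)
    exact eq_of_ne_of_ne_of_mem_pair (hab _) (hab _) (hab _) hlast hfirst

lemma eventuallyPeriodic_of_forall_next_eq (hR : ∀ w ∈ LangN u z.length, RightSpecial u w → w = z)
    (hloop : ∀ p, factorAt u z.length p = z → u (p + (returnTime hz p - 1)) = u (p + z.length))
    {β : A} (hβz : β :: z ∈ Lang u)
    (hβ : ∀ q, factorAt u (z.length + 1) q = β :: z → u (q + 1 + z.length) = β) :
    EventuallyPeriodic u := by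
  -- the loop leaving `z` by `β` returns through `β`, so it repeats forever
  have hstep (q) (hq : factorAt u (z.length + 1) q = β :: z) :
      factorAt u (z.length + 1) (q + 1) = z ++ [β] ∧ factorAt u z.length (q + 1) = z := by
    have hwin := (List.cons_eq_cons.1 ((factorAt_succ' ..).symm.trans hq)).2
    rw [factorAt_succ_of_factorAt_eq hwin, hβ q hq]
    exact ⟨rfl, hwin⟩
  obtain ⟨q₀, hq₀⟩ := exists_factorAt_eq_of_mem_Lang hβz rfl
  set T := returnTime hz (q₀ + 1)
  have hnext (q) (hq : factorAt u (z.length + 1) q = β :: z) :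
      factorAt u (z.length + 1) (q + T) = β :: z ∧
        factorAt u (T + z.length) (q + 1) = factorAt u (T + z.length) (q₀ + 1) := by
    obtain ⟨hedge, hwin⟩ := hstep q hq
    obtain ⟨hT, hseg⟩ := factorAt_returnTime_eq hz hR ((hstep q₀ hq₀).1.trans hedge.symm)
    refine ⟨?_, hseg.symm⟩
    have hlast := factorAt_returnTime_sub_one hz (i := q + 1)
    rwa [hloop _ hwin, hβ q hq, hT,
      show q + 1 + (T - 1) = q + T by have := one_le_returnTime hz (q₀ + 1); omega] at hlast
  have hk (k : ℕ) : factorAt u (z.length + 1) (q₀ + k * T) = β :: z := by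
    induction k with
    | zero => simpa using hq₀
    | succ k ih =>
      rw [show q₀ + (k + 1) * T = q₀ + k * T + T by ring]
      exact (hnext _ ih).1
  refine eventuallyPeriodic_of_factorAt_eq (N := q₀ + 1) (one_le_returnTime hz (q₀ + 1))
    fun k => ?_
  have := factorAt_eq_of_le (hnext _ (hk k)).2 (s := 0) (k := T) (by omega)
  simpa [Nat.add_right_comm] using this

lemma cons_append_mem_of_returnLetter_eq {a b : A} (hab : ∀ i, u i = a ∨ u i = b)
    (hper : ¬EventuallyPeriodic u) (hR : ∀ w ∈ LangN u z.length, RightSpecial u w → w = z)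
    (hloop : ∀ p, factorAt u z.length p = z → u (p + (returnTime hz p - 1)) = u (p + z.length))
    {α β : A} (hα : α = a ∨ α = b) (hβ : β = a ∨ β = b) (hαβ : α ≠ β)
    (hβz : β :: z ∈ Lang u) : β :: z ++ [α] ∈ Lang u := by
  by_contra hban
  refine hper (eventuallyPeriodic_of_forall_next_eq hz hR hloop hβz fun q hq => ?_)
  refine eq_of_ne_of_ne_of_mem_pair (hab _) hβ hα (fun h => hban ?_) hαβ.symm
  have hβzα : factorAt u (z.length + 1 + 1) q = β :: z ++ [α] := by
    rw [factorAt_succ, hq, show q + (z.length + 1) = q + 1 + z.length by omega, h]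
  exact hβzα ▸ factorAt_mem_Lang ..

end Loops

section Reversal

lemma reverse_mem_of_not_rightSpecial {u : ℕ → A} {m : List A}
    (hcl : ∀ w ∈ LangN u (m.length + 1), w.reverse ∈ Lang u)
    (hleft : ∀ w ∈ Lang u, ∃ x, x :: w ∈ Lang u) (hm : ¬RightSpecial u m) {α β : A}
    (h : α :: m ++ [β] ∈ Lang u) : (α :: m ++ [β]).reverse ∈ Lang u := by
  have hαm : α :: m ∈ Lang u := (mem_Lang_of_append_mem h).1
  have hmα : m.reverse ++ [α] ∈ Lang u := by
    simpa using hcl _ ⟨by simp, hαm⟩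
  obtain ⟨γ, hγ⟩ := hleft _ hmα
  have hmγ : m ++ [γ] ∈ Lang u := by
    simpa using hcl _ ⟨by simp, (mem_Lang_of_append_mem (w := γ :: m.reverse) hγ).1⟩
  have hmβ : m ++ [β] ∈ Lang u := mem_Lang_of_cons_mem h
  rw [reverse_cons_append, ← eq_of_not_rightSpecial hm hmγ hmβ]
  exact hγ

lemma reverse_mem_of_not_leftSpecial {u : ℕ → A} {m : List A}
    (hcl : ∀ w ∈ LangN u (m.length + 1), w.reverse ∈ Lang u) (hm : ¬LeftSpecial u m)
    {α β : A} (h : α :: m ++ [β] ∈ Lang u) : (α :: m ++ [β]).reverse ∈ Lang u := by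
  have hβm : β :: m.reverse ∈ Lang u := by
    simpa using hcl _ ⟨by simp, mem_Lang_of_cons_mem h⟩
  obtain ⟨δ, hδ⟩ := exists_append_singleton_mem hβm
  have hδm : δ :: m ∈ Lang u := by
    simpa using hcl _ ⟨by simp, mem_Lang_of_cons_mem hδ⟩
  have hαm : α :: m ∈ Lang u := (mem_Lang_of_append_mem h).1
  rw [reverse_cons_append, ← eq_of_not_leftSpecial hm hδm hαm]
  exact hδ

lemma palComplexity_eq_factorComplexity {u : ℕ → A} {n : ℕ}
    (h : ∀ w ∈ LangN u n, w.reverse = w) : palComplexity u n = factorComplexity u n := by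
  unfold palComplexity factorComplexity
  congr 1
  ext w
  exact ⟨fun hw => hw.1, fun hw => ⟨hw, h w hw⟩⟩

lemma reverse_eq_self_of_length_le_one {w : List A} (h : w.length ≤ 1) : w.reverse = w := by
  match w, h with
  | [], _ => rfl
  | [_], _ => rfl

end Reversal

namespace BinarySturmian

variable [Fintype A] {v : ℕ → A} {a b : A}

lemma cons_append_mem_of_bispecial (hv : BinarySturmian v a b) {n : ℕ} {z : List A}
    (hz : z ∈ LangN v n) (hr : RightSpecial v z) (hl : LeftSpecial v z) (hpal : z.reverse = z)
    (hcl : ∀ w ∈ LangN v (n + 1), w.reverse ∈ Lang v) (hP : ∃ W ∈ LangN v (n + 1), W.reverse = W)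
    {α β : A} (hα : α = a ∨ α = b) (hβ : β = a ∨ β = b) (hαβ : α ≠ β) :
    β :: z ++ [α] ∈ Lang v := by
  obtain ⟨rfl, hzL⟩ := hz
  have hinf := hv.sturmian.occursInf hzL
  have hR (w) (hw : w ∈ LangN v z.length) (h : RightSpecial v w) : w = z :=
    hv.eq_of_rightSpecial hw ⟨rfl, hzL⟩ h hr
  have hL (w) (hw : w ∈ LangN v z.length) (h : LeftSpecial v w) : w = z :=
    hv.eq_of_leftSpecial hw ⟨rfl, hzL⟩ h hl
  obtain ⟨W, hW, hWpal⟩ := hP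
  obtain ⟨p₀, hp₀, h₀⟩ := exists_returnLetter_eq_of_palindrome hinf hR hL hpal hcl hW hWpal
    (hv.sturmian.occursInf hW.2)
  exact cons_append_mem_of_returnLetter_eq hinf hv.mem hv.sturmian.not_eventuallyPeriodic hR
    (fun p hp => returnLetter_eq_of_binary hinf hv.mem hR hL hp₀ h₀ hp) hα hβ hαβ
    (hv.cons_mem_of_leftSpecial hl hβ)

lemma reverse_eq_of_bispecial (hv : BinarySturmian v a b) {n : ℕ} {z : List A}
    (hz : z ∈ LangN v n) (hr : RightSpecial v z) (hl : LeftSpecial v z)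
    (hcl : ∀ w ∈ LangN v (n + 1), w.reverse ∈ Lang v) : z.reverse = z := by
  obtain ⟨x, y, hxy, hx, hy⟩ := hl
  have hx' : z.reverse ++ [x] ∈ Lang v := by simpa using hcl _ ⟨by simp [hz.1], hx⟩
  have hy' : z.reverse ++ [y] ∈ Lang v := by simpa using hcl _ ⟨by simp [hz.1], hy⟩
  exact hv.eq_of_rightSpecial ⟨by simp [hz.1], (mem_Lang_of_append_mem hx').1⟩ hz
    ⟨x, y, hxy, hx', hy'⟩ hr

lemma reverse_mem_LangN_add_two (hv : BinarySturmian v a b) {n : ℕ}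
    (hcl : ∀ w ∈ LangN v (n + 1), w.reverse ∈ Lang v) (hP : ∃ W ∈ LangN v (n + 1), W.reverse = W) :
    ∀ W ∈ LangN v (n + 2), W.reverse ∈ Lang v := by
  intro W hW
  obtain ⟨α, m, β, rfl, hm⟩ := exists_eq_cons_append_of_mem_LangN hW
  have hcl' : ∀ w ∈ LangN v (m.length + 1), w.reverse ∈ Lang v := hm.1 ▸ hcl
  by_cases hr : RightSpecial v m
  swap
  · exact reverse_mem_of_not_rightSpecial hcl'
      (fun w hw => (hv.sturmian.occursInf hw).exists_cons_mem) hr hW.2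
  by_cases hl : LeftSpecial v m
  swap
  · exact reverse_mem_of_not_leftSpecial hcl' hl hW.2
  have hpal := hv.reverse_eq_of_bispecial hm hr hl hcl
  rw [reverse_cons_append, hpal]
  by_cases hαβ : α = β
  · exact hαβ ▸ hW.2
  · exact hv.cons_append_mem_of_bispecial hm hr hl hpal hcl hP
      (hv.mem_of_mem_Lang hW.2 (by simp)) (hv.mem_of_mem_Lang hW.2 (by simp)) hαβ

lemma exists_cons_append_mem_of_reverse_eq (hv : BinarySturmian v a b) {n : ℕ} {m : List A}
    (hm : m ∈ LangN v n) (hpal : m.reverse = m)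
    (hcl : ∀ w ∈ LangN v (n + 1), w.reverse ∈ Lang v) : ∃ x, x :: m ++ [x] ∈ Lang v := by
  by_cases hr : RightSpecial v m
  -- the right special factor of length `n + 1` ends with the right special factor `m`
  · obtain ⟨R, hR, hRs⟩ := hv.exists_rightSpecial (n + 1)
    obtain ⟨i, rfl⟩ := mem_LangN_iff.1 hR
    rw [factorAt_succ'] at hRs
    have hsuffix : RightSpecial v (factorAt v n (i + 1)) := by
      obtain ⟨x, y, hxy, hx, hy⟩ := hRs
      exact ⟨x, y, hxy, mem_Lang_of_cons_mem hx, mem_Lang_of_cons_mem hy⟩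
    rw [hv.eq_of_rightSpecial (factorAt_mem_LangN ..) hm hsuffix hr] at hRs
    exact ⟨v i, hv.append_mem_of_rightSpecial hRs (hv.mem i)⟩
  · obtain ⟨γ, hγ⟩ := (hv.sturmian.occursInf hm.2).exists_cons_mem
    obtain ⟨δ, hδ⟩ := exists_append_singleton_mem hγ
    have hmγ : m ++ [γ] ∈ Lang v := by
      simpa [hpal] using hcl _ ⟨by simp [hm.1], hγ⟩
    rw [← eq_of_not_rightSpecial hr hmγ (mem_Lang_of_cons_mem hδ)] at hδ
    exact ⟨γ, hδ⟩

lemma eq_of_cons_append_mem (hv : BinarySturmian v a b) {n : ℕ} {m : List A}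
    (hm : m ∈ LangN v n) (hpal : m.reverse = m)
    (hcl : ∀ w ∈ LangN v (n + 1), w.reverse ∈ Lang v) (hP : ∃ W ∈ LangN v (n + 1), W.reverse = W)
    {x y : A} (hx : x :: m ++ [x] ∈ Lang v) (hy : y :: m ++ [y] ∈ Lang v) : x = y := by
  -- otherwise `m` is bispecial, and then `x m` and `y m` are both right special
  by_contra hxy
  have hr : RightSpecial v m := ⟨x, y, hxy, mem_Lang_of_cons_mem hx, mem_Lang_of_cons_mem hy⟩
  have hl : LeftSpecial v m :=
    ⟨x, y, hxy, (mem_Lang_of_append_mem hx).1, (mem_Lang_of_append_mem hy).1⟩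
  have hx' := hv.mem_of_mem_Lang hx (x := x) (by simp)
  have hy' := hv.mem_of_mem_Lang hy (x := y) (by simp)
  have hxm : RightSpecial v (x :: m) :=
    ⟨x, y, hxy, hx, hv.cons_append_mem_of_bispecial hm hr hl hpal hcl hP hy' hx' (Ne.symm hxy)⟩
  have hym : RightSpecial v (y :: m) :=
    ⟨x, y, hxy, hv.cons_append_mem_of_bispecial hm hr hl hpal hcl hP hx' hy' hxy, hy⟩
  exact hxy (List.cons_eq_cons.1 (hv.eq_of_rightSpecial (n := n + 1)
    ⟨by simp [hm.1], (mem_Lang_of_append_mem hx).1⟩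
    ⟨by simp [hm.1], (mem_Lang_of_append_mem hy).1⟩ hxm hym)).1

lemma palComplexity_add_two (hv : BinarySturmian v a b) {n : ℕ}
    (hcl : ∀ w ∈ LangN v (n + 1), w.reverse ∈ Lang v) (hP : ∃ W ∈ LangN v (n + 1), W.reverse = W) :
    palComplexity v (n + 2) = palComplexity v n := by
  refine Set.ncard_congr (fun W _ => W.tail.dropLast) ?_ ?_ ?_
  · rintro W ⟨hW, hWpal⟩
    obtain ⟨α, m, β, rfl, hm⟩ := exists_eq_cons_append_of_mem_LangN hW
    simpa using ⟨hm, (eq_and_reverse_eq_of_reverse_eq hWpal).2⟩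
  · rintro W W' ⟨hW, hWpal⟩ ⟨hW', hW'pal⟩ hmid
    obtain ⟨α, m, β, rfl, hm⟩ := exists_eq_cons_append_of_mem_LangN hW
    obtain ⟨α', m', β', rfl, -⟩ := exists_eq_cons_append_of_mem_LangN hW'
    obtain ⟨rfl, hmpal⟩ := eq_and_reverse_eq_of_reverse_eq hWpal
    obtain ⟨rfl, -⟩ := eq_and_reverse_eq_of_reverse_eq hW'pal
    obtain rfl : m = m' := by simpa using hmid
    rw [hv.eq_of_cons_append_mem hm hmpal hcl hP hW.2 hW'.2]
  · rintro m ⟨hm, hmpal⟩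
    obtain ⟨x, hx⟩ := hv.exists_cons_append_mem_of_reverse_eq hm hmpal hcl
    exact ⟨x :: m ++ [x], ⟨⟨by simp [hm.1], hx⟩, by simp [hmpal]⟩, by simp⟩

lemma reverse_mem_and_palComplexity (hv : BinarySturmian v a b) (n : ℕ) :
    (∀ w ∈ LangN v n, w.reverse ∈ Lang v) ∧ palComplexity v n = if Even n then 1 else 2 := by
  have hsmall (n : ℕ) (hn : n ≤ 1) : ∀ w ∈ LangN v n, w.reverse = w :=
    fun w hw => reverse_eq_self_of_length_le_one (hw.1 ▸ hn)
  induction n using Nat.twoStepInduction with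
  | zero =>
    refine ⟨fun w hw => (hsmall 0 zero_le_one w hw).symm ▸ hw.2, ?_⟩
    rw [palComplexity_eq_factorComplexity (hsmall 0 zero_le_one), hv.sturmian]
    rfl
  | one =>
    refine ⟨fun w hw => (hsmall 1 le_rfl w hw).symm ▸ hw.2, ?_⟩
    rw [palComplexity_eq_factorComplexity (hsmall 1 le_rfl), hv.sturmian]
    rfl
  | more n ih₀ ih₁ =>
    have hP : ∃ W ∈ LangN v (n + 1), W.reverse = W := by
      have : palComplexity v (n + 1) ≠ 0 := by rw [ih₁.2]; split_ifs <;> omega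
      exact Set.nonempty_of_ncard_ne_zero this
    refine ⟨hv.reverse_mem_LangN_add_two ih₁.1 hP, ?_⟩
    rw [hv.palComplexity_add_two ih₁.1 hP, ih₀.2]
    simp [Nat.even_add_one]

end BinarySturmian

section ReflectionClasses

lemma mk_eq_mk_iff {w w' : List A} :
    Quotient.mk (reflSetoid A) w = Quotient.mk (reflSetoid A) w' ↔ w = w' ∨ w = w'.reverse :=
  Quotient.eq

lemma card_fiber_add_card_palindromic_fiber {S : Set (List A)} (hS : S.Finite)
    (hrev : ∀ w ∈ S, w.reverse ∈ S) (hP : {w ∈ S | w.reverse = w}.Finite) {w : List A}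
    (hw : w ∈ S) :
    (hS.toFinset.filter (Quotient.mk (reflSetoid A) · = Quotient.mk (reflSetoid A) w)).card +
      (hP.toFinset.filter (Quotient.mk (reflSetoid A) · = Quotient.mk (reflSetoid A) w)).card =
        2 := by
  by_cases hpal : w.reverse = w
  · have h₁ : hS.toFinset.filter (Quotient.mk _ · = Quotient.mk (reflSetoid A) w) = {w} := by
      ext x
      simp only [Finset.mem_filter, Set.Finite.mem_toFinset, mk_eq_mk_iff, hpal, or_self,
        Finset.mem_singleton]
      exact ⟨fun h => h.2, fun h => ⟨h ▸ hw, h⟩⟩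
    have h₂ : hP.toFinset.filter (Quotient.mk _ · = Quotient.mk (reflSetoid A) w) = {w} := by
      ext x
      simp only [Finset.mem_filter, Set.Finite.mem_toFinset, mk_eq_mk_iff, hpal, or_self,
        Finset.mem_singleton, Set.mem_ofPred_eq]
      exact ⟨fun h => h.2, fun h => ⟨⟨h ▸ hw, h ▸ hpal⟩, h⟩⟩
    simp [h₁, h₂]
  · have h₁ : hS.toFinset.filter (Quotient.mk _ · = Quotient.mk (reflSetoid A) w) =
        {w, w.reverse} := by
      ext x
      simp only [Finset.mem_filter, Set.Finite.mem_toFinset, mk_eq_mk_iff, Finset.mem_insert,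
        Finset.mem_singleton]
      exact ⟨fun h => h.2, fun h => ⟨by rcases h with rfl | rfl; exacts [hw, hrev _ hw], h⟩⟩
    have h₂ : hP.toFinset.filter (Quotient.mk _ · = Quotient.mk (reflSetoid A) w) = ∅ := by
      ext x
      simp only [Finset.mem_filter, Set.Finite.mem_toFinset, mk_eq_mk_iff, Set.mem_ofPred_eq,
        Finset.notMem_empty, iff_false]
      rintro ⟨⟨-, hx⟩, rfl | rfl⟩
      · exact hpal hx
      · exact hpal (by simpa [eq_comm] using hx)
    rw [h₁, h₂, Finset.card_pair (Ne.symm hpal), Finset.card_empty]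

lemma two_mul_nClasses {S : Set (List A)} (hS : S.Finite) (hrev : ∀ w ∈ S, w.reverse ∈ S) :
    2 * nClasses S = S.ncard + {w ∈ S | w.reverse = w}.ncard := by
  set mk := Quotient.mk (reflSetoid A)
  have hP : {w ∈ S | w.reverse = w}.Finite := hS.subset fun w hw => hw.1
  have hmaps {T : Set (List A)} (hT : T.Finite) (hTS : T ⊆ S) :
      Set.MapsTo mk hT.toFinset (hS.toFinset.image mk) := fun x hx => by
    simp only [Finset.coe_image, Set.Finite.coe_toFinset] at hx ⊢
    exact Set.mem_image_of_mem mk (hTS hx)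
  rw [Set.ncard_eq_toFinset_card S hS, Set.ncard_eq_toFinset_card _ hP,
    Finset.card_eq_sum_card_fiberwise (hmaps hS subset_rfl),
    Finset.card_eq_sum_card_fiberwise (hmaps hP fun w hw => hw.1), ← Finset.sum_add_distrib,
    Finset.sum_congr rfl (g := fun _ => 2), Finset.sum_const, smul_eq_mul, Nat.mul_comm, nClasses,
    ← Set.ncard_coe_finset, Finset.coe_image, Set.Finite.coe_toFinset]
  intro q hq
  obtain ⟨w, hw, rfl⟩ := Finset.mem_image.1 hq
  exact card_fiber_add_card_palindromic_fiber hS hrev hP ((Set.Finite.mem_toFinset _).1 hw)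

lemma nClasses_image {f : List A → List A} (hf : Function.Injective f)
    (hrev : ∀ w, (f w).reverse = f w.reverse) (S : Set (List A)) :
    nClasses (f '' S) = nClasses S := by
  have hresp (x y : List A) (h : ReflEquiv x y) : ReflEquiv (f x) (f y) := by
    rcases h with rfl | rfl
    exacts [Or.inl rfl, Or.inr (hrev y).symm]
  set F := Quotient.map (sa := reflSetoid A) (sb := reflSetoid A) f hresp
  have hinj : Function.Injective F := by
    refine Quotient.ind₂ fun x y h => ?_
    change Quotient.mk _ (f x) = Quotient.mk _ (f y) at h
    rw [mk_eq_mk_iff, hrev] at h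
    exact mk_eq_mk_iff.2 (h.imp (fun h => hf h) fun h => hf h)
  rw [nClasses, nClasses, Set.image_image,
    ← hinj.injOn.ncard_image (s := Quotient.mk (reflSetoid A) '' S), Set.image_image]
  rfl

lemma nClasses_union {S T : Set (List A)} (hS : S.Finite) (hT : T.Finite)
    (h : Disjoint (Quotient.mk (reflSetoid A) '' S) (Quotient.mk (reflSetoid A) '' T)) :
    nClasses (S ∪ T) = nClasses S + nClasses T := by
  rw [nClasses, Set.image_union, Set.ncard_union_eq h (hS.image _) (hT.image _)]
  rfl

lemma two_mul_reflComplexity [Finite A] {u : ℕ → A} {n : ℕ}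
    (hcl : ∀ w ∈ LangN u n, w.reverse ∈ Lang u) :
    2 * reflComplexity u n = factorComplexity u n + palComplexity u n :=
  two_mul_nClasses (finite_LangN u n) fun w hw => ⟨by simp [hw.1], hcl w hw⟩

end ReflectionClasses

section Interleaving

def piWord (c : A) (w : List A) : List A :=
  w.flatMap fun x => [x, c]

variable {c : A}

@[simp]
lemma piWord_nil : piWord c [] = [] :=
  rfl

@[simp]
lemma piWord_cons (x : A) (w : List A) : piWord c (x :: w) = x :: c :: piWord c w :=
  rfl

@[simp]
lemma piWord_append (w w' : List A) : piWord c (w ++ w') = piWord c w ++ piWord c w' :=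
  List.flatMap_append

lemma length_piWord (w : List A) : (piWord c w).length = 2 * w.length := by
  simp [piWord, Nat.mul_comm]

lemma piWord_injective : Function.Injective (piWord c) := by
  intro w
  induction w with
  | nil => rintro (_ | ⟨x, w'⟩) h <;> simp_all
  | cons x w ih =>
    rintro (_ | ⟨x', w'⟩) h
    · simp at h
    · simp only [piWord_cons, List.cons.injEq] at h
      rw [h.1, ih h.2.2]

lemma reverse_cons_piWord (w : List A) : (c :: piWord c w).reverse = c :: piWord c w.reverse := by
  induction w with
  | nil => rfl
  | cons x w ih =>
    rw [piWord_cons, List.reverse_cons, List.reverse_cons, ih, List.reverse_cons, piWord_append]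
    simp

lemma dropLast_piWord_cons (x : A) (w : List A) :
    (piWord c (x :: w)).dropLast = x :: (c :: piWord c w).dropLast := by
  simp

lemma cons_dropLast_piWord_append {w : List A} (hw : w ≠ []) :
    c :: (piWord c w).dropLast ++ [c] = c :: piWord c w := by
  obtain ⟨w, x, rfl⟩ := List.eq_nil_or_concat w |>.resolve_left hw
  simp

lemma reverse_dropLast_piWord (w : List A) :
    ((piWord c w).dropLast).reverse = (piWord c w.reverse).dropLast := by
  rcases eq_or_ne w [] with rfl | hw
  · rfl
  have h := reverse_cons_piWord (c := c) w
  rw [← cons_dropLast_piWord_append hw,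
    ← cons_dropLast_piWord_append (List.reverse_ne_nil_iff.2 hw), reverse_cons_append] at h
  simpa using h

lemma dropLast_piWord_injective : Function.Injective fun w => (piWord c w).dropLast := by
  intro w w' h
  simp only at h
  have hlen := congrArg List.length h
  simp only [List.length_dropLast, length_piWord] at hlen
  rcases eq_or_ne w [] with rfl | hw
  · exact (List.length_eq_zero_iff.1 (by simp at hlen; omega)).symm
  rcases eq_or_ne w' [] with rfl | hw'
  · exact absurd (List.length_eq_zero_iff.1 (by simp at hlen; omega)) hw
  have h' := congrArg (fun l => c :: l ++ [c]) h
  simp only [cons_dropLast_piWord_append hw, cons_dropLast_piWord_append hw'] at h'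
  exact piWord_injective (List.cons_injective h')

lemma exists_dropLast_piWord_eq_cons {w : List A} (hw : ∀ x ∈ w, x ≠ c) (hne : w ≠ []) :
    ∃ w₀ w', (piWord c w).dropLast = w₀ :: w' ∧ w₀ ≠ c := by
  obtain ⟨w₀, w', rfl⟩ := List.exists_cons_of_ne_nil hne
  exact ⟨w₀, _, dropLast_piWord_cons .., hw w₀ List.mem_cons_self⟩

end Interleaving

section PiSequence

variable {u v : ℕ → A} {c : A}

lemma factorAt_two_mul_two_mul (hu : ∀ i, u (2 * i) = v i ∧ u (2 * i + 1) = c) (m i : ℕ) :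
    factorAt u (2 * m) (2 * i) = piWord c (factorAt v m i) := by
  induction m with
  | zero => rfl
  | succ m ih =>
    rw [show 2 * (m + 1) = 2 * m + 2 by ring, factorAt_add, ih, factorAt_succ v m i, piWord_append,
      show 2 * i + 2 * m = 2 * (i + m) by ring]
    simp [factorAt, List.range_succ, (hu (i + m)).1, (hu (i + m)).2]

lemma factorAt_two_mul_add_one_two_mul_add_one (hu : ∀ i, u (2 * i) = v i ∧ u (2 * i + 1) = c)
    (m i : ℕ) : factorAt u (2 * m + 1) (2 * i + 1) = c :: piWord c (factorAt v m (i + 1)) := by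
  rw [factorAt_succ', show 2 * i + 1 + 1 = 2 * (i + 1) by ring, factorAt_two_mul_two_mul hu,
    (hu i).2]

lemma factorAt_two_mul_two_mul_add_one (hu : ∀ i, u (2 * i) = v i ∧ u (2 * i + 1) = c)
    (m i : ℕ) :
    factorAt u (2 * m) (2 * i + 1) = (piWord c (factorAt v m (i + 1)).reverse).reverse := by
  have h := factorAt_two_mul_add_one_two_mul_add_one hu m i
  rw [factorAt_succ, show 2 * i + 1 + 2 * m = 2 * (i + m) + 1 by ring, (hu _).2] at h
  have h' := congrArg List.reverse h
  rw [reverse_cons_piWord, List.reverse_append, List.reverse_singleton, List.singleton_append,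
    List.cons_eq_cons] at h'
  rw [← h'.2, List.reverse_reverse]

lemma factorAt_two_mul_add_one_two_mul (hu : ∀ i, u (2 * i) = v i ∧ u (2 * i + 1) = c)
    (m i : ℕ) : factorAt u (2 * m + 1) (2 * i) = (piWord c (factorAt v (m + 1) i)).dropLast := by
  rw [← factorAt_two_mul_two_mul hu, show 2 * (m + 1) = 2 * m + 1 + 1 by ring,
    factorAt_succ u (2 * m + 1), List.dropLast_concat]

lemma image_mk_LangN_two_mul (hu : ∀ i, u (2 * i) = v i ∧ u (2 * i + 1) = c) {m : ℕ}
    (hcl : ∀ w ∈ LangN v m, w.reverse ∈ Lang v) :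
    Quotient.mk (reflSetoid A) '' LangN u (2 * m) =
      (fun x => Quotient.mk (reflSetoid A) (piWord c x)) '' LangN v m := by
  ext q
  simp only [Set.mem_image]
  constructor
  · rintro ⟨W, hW, rfl⟩
    obtain ⟨j, rfl⟩ := mem_LangN_iff.1 hW
    obtain ⟨i, rfl | rfl⟩ := Nat.even_or_odd' j
    · exact ⟨_, factorAt_mem_LangN .., by rw [factorAt_two_mul_two_mul hu]⟩
    · refine ⟨(factorAt v m (i + 1)).reverse,
        ⟨by simp [length_factorAt], hcl _ (factorAt_mem_LangN ..)⟩, ?_⟩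
      rw [factorAt_two_mul_two_mul_add_one hu]
      exact mk_eq_mk_iff.2 (Or.inr (List.reverse_reverse _).symm)
  · rintro ⟨x, hx, rfl⟩
    obtain ⟨i, rfl⟩ := mem_LangN_iff.1 hx
    exact ⟨_, factorAt_mem_LangN u (2 * m) (2 * i), by rw [factorAt_two_mul_two_mul hu]⟩

lemma reflComplexity_two_mul (hu : ∀ i, u (2 * i) = v i ∧ u (2 * i + 1) = c)
    (hvc : ∀ i, v i ≠ c) {m : ℕ} (hcl : ∀ w ∈ LangN v m, w.reverse ∈ Lang v) :
    reflComplexity u (2 * m) = factorComplexity v m := by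
  have hinj : Set.InjOn (fun x => Quotient.mk (reflSetoid A) (piWord c x)) (LangN v m) := by
    intro x hx x' hx' h
    rcases mk_eq_mk_iff.1 h with h | h
    · exact piWord_injective h
    rcases x with _ | ⟨x₀, t⟩
    · exact (List.length_eq_zero_iff.1 (hx'.1.trans hx.1.symm)).symm
    -- `π x` would start with a letter of `v`, the reversal of `π x'` starts with `c`
    have hx₀ := reverse_cons_piWord (c := c) x'
    rw [List.reverse_cons, ← h, piWord_cons, List.cons_append, List.cons_eq_cons] at hx₀
    obtain ⟨j, hj⟩ := exists_eq_of_mem_Lang hx.2 List.mem_cons_self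
    exact absurd (hj ▸ hx₀.1) (hvc j)
  rw [reflComplexity, nClasses, image_mk_LangN_two_mul hu hcl, hinj.ncard_image]
  rfl

lemma LangN_two_mul_add_one (hu : ∀ i, u (2 * i) = v i ∧ u (2 * i + 1) = c) {m : ℕ}
    (hleft : ∀ w ∈ LangN v m, ∃ x, x :: w ∈ Lang v) :
    LangN u (2 * m + 1) = (fun x => (piWord c x).dropLast) '' LangN v (m + 1) ∪
      (fun y => c :: piWord c y) '' LangN v m := by
  ext W
  constructor
  · intro hW
    obtain ⟨j, rfl⟩ := mem_LangN_iff.1 hW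
    obtain ⟨i, rfl | rfl⟩ := Nat.even_or_odd' j
    · exact Or.inl ⟨_, factorAt_mem_LangN .., (factorAt_two_mul_add_one_two_mul hu m i).symm⟩
    · exact Or.inr ⟨_, factorAt_mem_LangN ..,
        (factorAt_two_mul_add_one_two_mul_add_one hu m i).symm⟩
  · rintro (⟨x, hx, rfl⟩ | ⟨y, hy, rfl⟩)
    · obtain ⟨i, rfl⟩ := mem_LangN_iff.1 hx
      simp only
      rw [← factorAt_two_mul_add_one_two_mul hu]
      exact factorAt_mem_LangN ..
    · obtain ⟨x, hx⟩ := hleft y hy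
      obtain ⟨i, hi⟩ := exists_factorAt_eq_of_mem_Lang hx (n := m + 1) (by simp [hy.1])
      rw [factorAt_succ'] at hi
      simp only
      rw [← (List.cons_eq_cons.1 hi).2, ← factorAt_two_mul_add_one_two_mul_add_one hu]
      exact factorAt_mem_LangN ..

lemma reflComplexity_two_mul_add_one [Finite A] (hu : ∀ i, u (2 * i) = v i ∧ u (2 * i + 1) = c)
    (hvc : ∀ i, v i ≠ c) {m : ℕ} (hleft : ∀ w ∈ LangN v m, ∃ x, x :: w ∈ Lang v) :
    reflComplexity u (2 * m + 1) = reflComplexity v (m + 1) + reflComplexity v m := by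
  have hdisj : Disjoint
      (Quotient.mk (reflSetoid A) '' ((fun x => (piWord c x).dropLast) '' LangN v (m + 1)))
      (Quotient.mk (reflSetoid A) '' ((fun y => c :: piWord c y) '' LangN v m)) := by
    rw [Set.disjoint_left]
    rintro q ⟨_, ⟨x, hx, rfl⟩, rfl⟩ ⟨_, ⟨y, -, rfl⟩, h⟩
    have hxc (a) (ha : a ∈ x) : a ≠ c := by
      obtain ⟨j, rfl⟩ := exists_eq_of_mem_Lang hx.2 ha
      exact hvc j
    have hxne : x ≠ [] := List.ne_nil_of_length_pos (by simp [hx.1])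
    rcases mk_eq_mk_iff.1 h with h | h
    · obtain ⟨w₀, w', he, hw₀⟩ := exists_dropLast_piWord_eq_cons hxc hxne
      exact hw₀ (List.cons_eq_cons.1 (h.trans he)).1.symm
    · obtain ⟨w₀, w', he, hw₀⟩ := exists_dropLast_piWord_eq_cons
        (fun a ha => hxc a (List.mem_reverse.1 ha)) (List.reverse_ne_nil_iff.2 hxne)
      rw [reverse_dropLast_piWord] at h
      exact hw₀ (List.cons_eq_cons.1 (h.trans he)).1.symm
  rw [reflComplexity, LangN_two_mul_add_one hu hleft,
    nClasses_union ((finite_LangN _ _).image _) ((finite_LangN _ _).image _) hdisj,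
    nClasses_image dropLast_piWord_injective reverse_dropLast_piWord,
    nClasses_image (fun y y' h => piWord_injective (List.cons_injective h)) reverse_cons_piWord]
  rfl

end PiSequence

lemma BinarySturmian.reflComplexity_add_two [Fintype A] {v : ℕ → A} {a b : A}
    (hv : BinarySturmian v a b) (n : ℕ) : reflComplexity v (n + 2) = reflComplexity v n + 1 := by
  obtain ⟨hcl₀, hP₀⟩ := hv.reverse_mem_and_palComplexity n
  obtain ⟨hcl₂, hP₂⟩ := hv.reverse_mem_and_palComplexity (n + 2)
  have h₀ := two_mul_reflComplexity hcl₀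
  have h₂ := two_mul_reflComplexity hcl₂
  rw [hP₀, factorComplexity, hv.sturmian.ncard_LangN] at h₀
  rw [hP₂, factorComplexity, hv.sturmian.ncard_LangN] at h₂
  simp only [Nat.even_add_one, not_not] at h₂
  split_ifs at h₀ h₂ <;> omega

/-- if `v` is Sturmian over `{a,b}` and `u = π(v)` with `π : a ↦ ac, b ↦ bc`,
then `r_u(n+2) = r_u(n) + 1` for every `n`. -/
theorem stmt8 {A : Type*} [Fintype A] (a b c : A) (hab : a ≠ b) (hca : c ≠ a) (hcb : c ≠ b)
    (v : ℕ → A) (hv : ∀ i, v i = a ∨ v i = b) (hst : Sturmian v)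
    (u : ℕ → A) (hu : ∀ i, u (2 * i) = v i ∧ u (2 * i + 1) = c) :
    ∀ n : ℕ, reflComplexity u (n + 2) = reflComplexity u n + 1 := by
  have hbin : BinarySturmian v a b := ⟨hab, hv, hst⟩
  have hvc (i : ℕ) : v i ≠ c := by
    rcases hv i with h | h <;> rw [h]
    exacts [hca.symm, hcb.symm]
  have hcl (m : ℕ) := (hbin.reverse_mem_and_palComplexity m).1
  have hleft (m : ℕ) (w) (hw : w ∈ LangN v m) : ∃ x, x :: w ∈ Lang v :=
    (hst.occursInf hw.2).exists_cons_mem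
  intro n
  obtain ⟨m, rfl | rfl⟩ := Nat.even_or_odd' n
  · rw [show 2 * m + 2 = 2 * (m + 1) by ring, reflComplexity_two_mul hu hvc (hcl _),
      reflComplexity_two_mul hu hvc (hcl _), factorComplexity, factorComplexity,
      hst.ncard_LangN, hst.ncard_LangN]
  · rw [show 2 * m + 1 + 2 = 2 * (m + 1) + 1 by ring, reflComplexity_two_mul_add_one hu hvc
      (hleft _), reflComplexity_two_mul_add_one hu hvc (hleft _), hbin.reflComplexity_add_two]
    ring

end ReflPaper
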